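/- In the Maddex model with N ≥ 2 cans and C ≤ 1, there is a plan whose final state has the jeep at position 0, one can full (content C) at position 0, and the remaining N − 1 cans full (content C) at the positions D_{N−2}, D_{N−3}, …, D_1, D_0 respectively; that is, the jeep can dump N − 1 full cans at D_{N−2}, …, D_1, D_0, in this order, without using fuel of the last can, and return to the fuel station. -/
import Mathlib


/-- A state of Maddex' jeep problem with `N` cans: the jeep's position, its
tank content, and the position and fuel content of each can. -/
structure MaddexState (N : ℕ) where
  pos : ℝ
  tank : ℝ
  canPos : Fin N → ℝ
  canFuel : Fin N → ℝ

/-- Admissible moves of Maddex' jeep problem with can capacity `C` and at most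
`B` cans carried at a time: drive (taking along at most `B` cans located at
the jeep's position and consuming one tankload per unit of distance), move
fuel from a can at the jeep's position into the tank, move fuel between two
cans at the jeep's position, or (at the fuel station `0`) fill the tank and
any cans located at `0` up to their capacities.  Fuel is never moved from the
tank into a can. -/
inductive MaddexStep {N : ℕ} (C : ℝ) (B : ℕ) :
    MaddexState N → MaddexState N → Prop
  | drive (s : MaddexState N) (p' : ℝ) (S : Finset (Fin N))
      (hcard : S.card ≤ B) (hS : ∀ i ∈ S, s.canPos i = s.pos)
      (hfuel : 0 ≤ s.tank - |p' - s.pos|) :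
      MaddexStep C B s ⟨p', s.tank - |p' - s.pos|,
        fun i => if i ∈ S then p' else s.canPos i, s.canFuel⟩
  | canToTank (s : MaddexState N) (i : Fin N) (a : ℝ)
      (hloc : s.canPos i = s.pos) (ha : 0 ≤ a)
      (htank : s.tank + a ≤ 1) (hcan : 0 ≤ s.canFuel i - a) :
      MaddexStep C B s ⟨s.pos, s.tank + a, s.canPos,
        Function.update s.canFuel i (s.canFuel i - a)⟩
  | canToCan (s : MaddexState N) (i j : Fin N) (hij : i ≠ j) (a : ℝ)
      (hi : s.canPos i = s.pos) (hj : s.canPos j = s.pos) (ha : 0 ≤ a)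
      (hfull : s.canFuel j + a ≤ C) (hcan : 0 ≤ s.canFuel i - a) :
      MaddexStep C B s ⟨s.pos, s.tank, s.canPos,
        Function.update (Function.update s.canFuel i (s.canFuel i - a)) j
          (s.canFuel j + a)⟩
  | refill (s : MaddexState N) (hp : s.pos = 0) (t' : ℝ) (c' : Fin N → ℝ)
      (ht0 : s.tank ≤ t') (ht1 : t' ≤ 1)
      (hc : ∀ i, s.canFuel i ≤ c' i ∧ c' i ≤ C ∧
        (s.canPos i ≠ 0 → c' i = s.canFuel i)) :
      MaddexStep C B s ⟨s.pos, t', s.canPos, c'⟩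

/-- The initial state of Maddex' jeep problem: the jeep and all cans are at
the fuel station `0`, the tank is full and every can is full. -/
def maddexInit (N : ℕ) (C : ℝ) : MaddexState N :=
  ⟨0, 1, fun _ => 0, fun _ => C⟩

namespace MaddexAux

open scoped Classical

noncomputable def Dd (C : ℝ) (k : ℕ) : ℝ := ((k : ℝ) * C + 1) / 2

lemma Dd_zero (C : ℝ) : Dd C 0 = 1/2 := by simp [Dd]

lemma Dd_succ_sub (C : ℝ) (k : ℕ) : Dd C (k+1) - Dd C k = C/2 := by
  simp only [Dd]; push_cast; ring

lemma Dd_pos {C : ℝ} (hC : 0 ≤ C) (k : ℕ) : 0 < Dd C k := by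
  have : (0:ℝ) ≤ (k : ℝ) * C := by positivity
  unfold Dd; linarith

noncomputable def st (N : ℕ) (C : ℝ) (q : ℕ → Prop) (φ : ℕ → ℝ) : MaddexState N :=
  ⟨0, 1, fun i => if q i.val then Dd C i.val else 0,
        fun i => if q i.val then φ i.val else C⟩

lemma st_congr {N : ℕ} {C : ℝ} {q q' : ℕ → Prop} {φ φ' : ℕ → ℝ}
    (h1 : ∀ i : Fin N, q i.val ↔ q' i.val)
    (h2 : ∀ i : Fin N, q i.val → φ i.val = φ' i.val) :
    st N C q φ = st N C q' φ' := by
  simp only [st, MaddexState.mk.injEq, true_and]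
  constructor <;> funext i <;> by_cases h : q i.val
  · rw [if_pos h, if_pos ((h1 i).1 h)]
  · rw [if_neg h, if_neg (fun h' => h ((h1 i).2 h'))]
  · rw [if_pos h, if_pos ((h1 i).1 h), h2 i h]
  · rw [if_neg h, if_neg (fun h' => h ((h1 i).2 h'))]

lemma mst_ext {N : ℕ} {s t : MaddexState N} (h1 : s.pos = t.pos) (h2 : s.tank = t.tank)
    (h3 : s.canPos = t.canPos) (h4 : s.canFuel = t.canFuel) : s = t := by
  cases s; cases t; simp_all

def Stp (N : ℕ) (C : ℝ) (B : ℕ) (i₀ : Fin N) (s s' : MaddexState N) : Prop :=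
  MaddexStep C B s s' ∧ (s.canFuel i₀ = C → s'.canFuel i₀ = C)

def Rch (N : ℕ) (C : ℝ) (B : ℕ) (i₀ : Fin N) : MaddexState N → MaddexState N → Prop :=
  Relation.ReflTransGen (Stp N C B i₀)

variable {N B : ℕ} {C : ℝ} {i₀ : Fin N}

lemma stp_drive (s : MaddexState N) (p' : ℝ) (S : Finset (Fin N))
    (hcard : S.card ≤ B) (hS : ∀ i ∈ S, s.canPos i = s.pos)
    (hfuel : 0 ≤ s.tank - |p' - s.pos|) {s' : MaddexState N}
    (h : s' = ⟨p', s.tank - |p' - s.pos|,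
      fun i => if i ∈ S then p' else s.canPos i, s.canFuel⟩) :
    Stp N C B i₀ s s' := by
  subst h; exact ⟨.drive s p' S hcard hS hfuel, fun h => h⟩

lemma stp_drink (s : MaddexState N) (i : Fin N) (a : ℝ)
    (hloc : s.canPos i = s.pos) (ha : 0 ≤ a)
    (htank : s.tank + a ≤ 1) (hcan : 0 ≤ s.canFuel i - a)
    (hi : i ≠ i₀) {s' : MaddexState N}
    (h : s' = ⟨s.pos, s.tank + a, s.canPos,
      Function.update s.canFuel i (s.canFuel i - a)⟩) :
    Stp N C B i₀ s s' := by
  subst h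
  refine ⟨.canToTank s i a hloc ha htank hcan, fun h' => ?_⟩
  simpa [Function.update_of_ne (Ne.symm hi)] using h'

lemma stp_refill (s : MaddexState N) (hp : s.pos = 0) (hC0 : 0 ≤ C)
    (ht : s.tank ≤ 1) (hf : ∀ i, s.canFuel i ≤ C) {s' : MaddexState N}
    (h1 : s'.pos = 0) (h2 : s'.tank = 1) (h3 : s'.canPos = s.canPos)
    (h4 : ∀ i, s.canPos i = 0 → s'.canFuel i = C)
    (h5 : ∀ i, s.canPos i ≠ 0 → s'.canFuel i = s.canFuel i) :
    Stp N C B i₀ s s' := by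
  constructor
  · have heq : s' = ⟨s.pos, 1, s.canPos, s'.canFuel⟩ :=
      mst_ext (by rw [h1, hp]) h2 h3 rfl
    rw [heq]
    refine .refill s hp 1 s'.canFuel ht le_rfl fun i => ?_
    by_cases hpi : s.canPos i = 0
    · rw [h4 i hpi]
      exact ⟨hf i, le_rfl, fun hne => absurd hpi hne⟩
    · rw [h5 i hpi]
      exact ⟨le_rfl, hf i, fun _ => rfl⟩
  · intro hfi
    by_cases hpi : s.canPos i₀ = 0
    · rw [h4 i₀ hpi]
    · rw [h5 i₀ hpi, hfi]

lemma st_canPos_of {q : ℕ → Prop} {φ : ℕ → ℝ} (i : Fin N) (h : q i.val) :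
    (st N C q φ).canPos i = Dd C i.val := by
  show (if q i.val then Dd C i.val else 0) = _
  rw [if_pos h]

lemma st_canPos_not {q : ℕ → Prop} {φ : ℕ → ℝ} (i : Fin N) (h : ¬ q i.val) :
    (st N C q φ).canPos i = 0 := by
  show (if q i.val then Dd C i.val else 0) = _
  rw [if_neg h]

lemma st_canFuel_of {q : ℕ → Prop} {φ : ℕ → ℝ} (i : Fin N) (h : q i.val) :
    (st N C q φ).canFuel i = φ i.val := by
  show (if q i.val then φ i.val else C) = _
  rw [if_pos h]

lemma st_canFuel_not {q : ℕ → Prop} {φ : ℕ → ℝ} (i : Fin N) (h : ¬ q i.val) :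
    (st N C q φ).canFuel i = C := by
  show (if q i.val then φ i.val else C) = _
  rw [if_neg h]

lemma rch_out (hC : 0 < C) (hC1 : C ≤ 1) (j : ℕ) (hjN : j ≤ N)
    (carried : Finset (Fin N)) (hcard : carried.card ≤ B)
    (P F : Fin N → ℝ)
    (hcp : ∀ c ∈ carried, P c = 0)
    (hPs : ∀ k : Fin N, k.val < j → P k = Dd C k.val)
    (hFs : ∀ k : Fin N, k.val < j → F k = C)
    (hsc : ∀ k : Fin N, k.val < j → k ∉ carried)
    (hki : ∀ k : Fin N, k.val < j → k ≠ i₀) :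
    Rch N C B i₀ ⟨0, 1, P, F⟩
      ⟨Dd C j, 1/2, fun c => if c ∈ carried then Dd C j else P c,
        fun c => if c.val < j then C/2 else F c⟩ := by
  have habs0 : |Dd C 0 - 0| = 1/2 := by
    rw [Dd_zero, sub_zero, abs_of_nonneg (by norm_num)]
  induction j with
  | zero =>
    refine Relation.ReflTransGen.single (stp_drive _ (Dd C 0) carried hcard
      (fun i hi => by simpa using hcp i hi) ?_ ?_)
    · show (0:ℝ) ≤ 1 - |Dd C 0 - 0|
      rw [habs0]; norm_num
    · refine mst_ext rfl ?_ rfl ?_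
      · show (1:ℝ)/2 = 1 - |Dd C 0 - 0|
        rw [habs0]; norm_num
      · funext c; simp
  | succ j ih =>
    have hjltN : j < N := hjN
    have h1 : Rch N C B i₀ ⟨0, 1, P, F⟩
        ⟨Dd C j, 1/2, fun c => if c ∈ carried then Dd C j else P c,
          fun c => if c.val < j then C/2 else F c⟩ :=
      ih (by omega) (fun k hk => hPs k (by omega)) (fun k hk => hFs k (by omega))
        (fun k hk => hsc k (by omega)) (fun k hk => hki k (by omega))
    have hsv : ((⟨j, hjltN⟩ : Fin N) : ℕ) = j := rfl
    have hsjnc : (⟨j, hjltN⟩ : Fin N) ∉ carried := hsc _ (by omega)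
    have hFsj : F ⟨j, hjltN⟩ = C := hFs _ (by omega)
    have h2 : Stp N C B i₀
        ⟨Dd C j, 1/2, fun c => if c ∈ carried then Dd C j else P c,
          fun c => if c.val < j then C/2 else F c⟩
        ⟨Dd C j, (1+C)/2, fun c => if c ∈ carried then Dd C j else P c,
          fun c => if c.val < j + 1 then C/2 else F c⟩ := by
      refine stp_drink _ ⟨j, hjltN⟩ (C/2) ?_ (by linarith) ?_ ?_ (hki _ (by omega)) ?_
      · show (if (⟨j, hjltN⟩ : Fin N) ∈ carried then Dd C j else P ⟨j, hjltN⟩) = Dd C j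
        rw [if_neg hsjnc, hPs _ (by omega)]
      · show (1:ℝ)/2 + C/2 ≤ 1; linarith
      · show (0:ℝ) ≤ (if j < j then C/2 else F ⟨j, hjltN⟩) - C/2
        rw [if_neg (lt_irrefl j), hFsj]; linarith
      · refine mst_ext rfl (by show (1+C)/2 = (1:ℝ)/2 + C/2; ring) rfl ?_
        funext c
        show (if c.val < j + 1 then C/2 else F c) = Function.update
          (fun c : Fin N => if c.val < j then C/2 else F c) ⟨j, hjltN⟩
          ((if j < j then C/2 else F ⟨j, hjltN⟩) - C/2) c
        by_cases hc : c = ⟨j, hjltN⟩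
        · subst hc
          rw [Function.update_self, hsv, if_pos (Nat.lt_succ_self j),
            if_neg (lt_irrefl j), hFsj]
          ring
        · rw [Function.update_of_ne hc]
          have hcv : c.val ≠ j := fun h => hc (Fin.ext h)
          by_cases h3 : c.val < j
          · rw [if_pos (by omega), if_pos h3]
          · rw [if_neg (by omega), if_neg h3]
    have habs : |Dd C (j+1) - Dd C j| = C/2 := by
      rw [Dd_succ_sub, abs_of_nonneg (by linarith)]
    have h3 : Stp N C B i₀
        ⟨Dd C j, (1+C)/2, fun c => if c ∈ carried then Dd C j else P c,
          fun c => if c.val < j + 1 then C/2 else F c⟩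
        ⟨Dd C (j+1), 1/2, fun c => if c ∈ carried then Dd C (j+1) else P c,
          fun c => if c.val < j + 1 then C/2 else F c⟩ := by
      refine stp_drive _ (Dd C (j+1)) carried hcard
        (fun i hi => by show (if i ∈ carried then _ else _) = _; rw [if_pos hi]) ?_ ?_
      · show (0:ℝ) ≤ (1+C)/2 - |Dd C (j+1) - Dd C j|
        rw [habs]; linarith
      · refine mst_ext rfl ?_ ?_ rfl
        · show (1:ℝ)/2 = (1+C)/2 - |Dd C (j+1) - Dd C j|
          rw [habs]; ring
        · funext c
          show (if c ∈ carried then Dd C (j+1) else P c)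
            = (if c ∈ carried then Dd C (j+1) else if c ∈ carried then Dd C j else P c)
          by_cases hc : c ∈ carried <;> simp [hc]
    exact (h1.tail h2).tail h3

lemma rch_in (hC : 0 < C) (hC1 : C ≤ 1) (j : ℕ) (hjN : j ≤ N)
    (carried : Finset (Fin N)) (hcard : carried.card ≤ B)
    (P : Fin N → ℝ) :
    ∀ (F : Fin N → ℝ),
    (∀ k : Fin N, k.val < j → P k = Dd C k.val) →
    (∀ k : Fin N, k.val < j → F k = C/2) →
    (∀ k : Fin N, k.val < j → k ∉ carried) →
    (∀ k : Fin N, k.val < j → k ≠ i₀) →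
    Rch N C B i₀
      ⟨Dd C j, 1/2, fun c => if c ∈ carried then Dd C j else P c, F⟩
      ⟨0, 0, fun c => if c ∈ carried then 0 else P c,
        fun c => if c.val < j then 0 else F c⟩ := by
  induction j with
  | zero =>
    intro F _ _ _ _
    have habs0 : |0 - Dd C 0| = 1/2 := by
      rw [abs_sub_comm, Dd_zero, sub_zero, abs_of_nonneg (by norm_num)]
    refine Relation.ReflTransGen.single (stp_drive _ 0 carried hcard
      (fun i hi => by show (if i ∈ carried then _ else _) = _; rw [if_pos hi]) ?_ ?_)
    · show (0:ℝ) ≤ 1/2 - |0 - Dd C 0|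
      rw [habs0]; norm_num
    · refine mst_ext rfl ?_ ?_ ?_
      · show (0:ℝ) = 1/2 - |0 - Dd C 0|
        rw [habs0]; norm_num
      · funext c
        show (if c ∈ carried then (0:ℝ) else P c)
          = (if c ∈ carried then 0 else if c ∈ carried then Dd C 0 else P c)
        by_cases hc : c ∈ carried <;> simp [hc]
      · funext c; simp
  | succ j ih =>
    intro F hPs hFs hsc hki
    have hjltN : j < N := hjN
    have hsjnc : (⟨j, hjltN⟩ : Fin N) ∉ carried := hsc _ (Nat.lt_succ_self j)
    have hPsj : P ⟨j, hjltN⟩ = Dd C j := hPs _ (Nat.lt_succ_self j)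
    have hFsj : F ⟨j, hjltN⟩ = C/2 := hFs _ (Nat.lt_succ_self j)
    have habs : |Dd C j - Dd C (j+1)| = C/2 := by
      rw [abs_sub_comm, Dd_succ_sub, abs_of_nonneg (by linarith)]
    -- drive back one leg
    have h1 : Stp N C B i₀
        ⟨Dd C (j+1), 1/2, fun c => if c ∈ carried then Dd C (j+1) else P c, F⟩
        ⟨Dd C j, (1-C)/2, fun c => if c ∈ carried then Dd C j else P c, F⟩ := by
      refine stp_drive _ (Dd C j) carried hcard
        (fun i hi => by show (if i ∈ carried then _ else _) = _; rw [if_pos hi]) ?_ ?_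
      · show (0:ℝ) ≤ 1/2 - |Dd C j - Dd C (j+1)|
        rw [habs]; linarith
      · refine mst_ext rfl ?_ ?_ rfl
        · show (1-C)/2 = (1:ℝ)/2 - |Dd C j - Dd C (j+1)|
          rw [habs]; ring
        · funext c
          show (if c ∈ carried then Dd C j else P c)
            = (if c ∈ carried then Dd C j else if c ∈ carried then Dd C (j+1) else P c)
          by_cases hc : c ∈ carried <;> simp [hc]
    -- drink the rest of stone j
    have h2 : Stp N C B i₀
        ⟨Dd C j, (1-C)/2, fun c => if c ∈ carried then Dd C j else P c, F⟩
        ⟨Dd C j, 1/2, fun c => if c ∈ carried then Dd C j else P c,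
          Function.update F ⟨j, hjltN⟩ 0⟩ := by
      refine stp_drink _ ⟨j, hjltN⟩ (C/2) ?_ (by linarith) ?_ ?_ (hki _ (Nat.lt_succ_self j)) ?_
      · show (if (⟨j, hjltN⟩ : Fin N) ∈ carried then Dd C j else P ⟨j, hjltN⟩) = Dd C j
        rw [if_neg hsjnc, hPsj]
      · show (1-C)/2 + C/2 ≤ (1:ℝ); linarith
      · show (0:ℝ) ≤ F ⟨j, hjltN⟩ - C/2
        rw [hFsj]; linarith
      · refine mst_ext rfl (by show (1:ℝ)/2 = (1-C)/2 + C/2; ring) rfl ?_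
        funext c
        show Function.update F ⟨j, hjltN⟩ 0 c
          = Function.update F ⟨j, hjltN⟩ (F ⟨j, hjltN⟩ - C/2) c
        by_cases hc : c = ⟨j, hjltN⟩
        · subst hc
          rw [Function.update_self, Function.update_self, hFsj]
          ring
        · rw [Function.update_of_ne hc, Function.update_of_ne hc]
    -- recurse
    have h3 : Rch N C B i₀
        ⟨Dd C j, 1/2, fun c => if c ∈ carried then Dd C j else P c,
          Function.update F ⟨j, hjltN⟩ 0⟩
        ⟨0, 0, fun c => if c ∈ carried then 0 else P c,
          fun c => if c.val < j then 0 else Function.update F ⟨j, hjltN⟩ 0 c⟩ :=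
      ih (by omega) (Function.update F ⟨j, hjltN⟩ 0)
        (fun k hk => hPs k (by omega))
        (fun k hk => by
          rw [Function.update_of_ne (fun h => by
            have : k.val = j := congrArg Fin.val h
            omega)]
          exact hFs k (by omega))
        (fun k hk => hsc k (by omega)) (fun k hk => hki k (by omega))
    have heq : (⟨0, 0, fun c => if c ∈ carried then 0 else P c,
          fun c => if c.val < j then 0 else Function.update F ⟨j, hjltN⟩ 0 c⟩ : MaddexState N)
        = ⟨0, 0, fun c => if c ∈ carried then 0 else P c,
          fun c => if c.val < j + 1 then 0 else F c⟩ := by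
      refine mst_ext rfl rfl rfl ?_
      funext c
      show (if (c:ℕ) < j then (0:ℝ) else Function.update F ⟨j, hjltN⟩ 0 c)
        = if (c:ℕ) < j + 1 then 0 else F c
      by_cases hc : c = ⟨j, hjltN⟩
      · subst hc
        rw [if_neg (lt_irrefl j), if_pos (Nat.lt_succ_self j), Function.update_self]
      · rw [Function.update_of_ne hc]
        have hcv : c.val ≠ j := fun h => hc (Fin.ext h)
        by_cases h4 : c.val < j
        · rw [if_pos h4, if_pos (by omega)]
        · rw [if_neg h4, if_neg (by omega)]
    rw [heq] at h3
    exact Relation.ReflTransGen.trans ((Relation.ReflTransGen.single h1).tail h2) h3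

lemma rch_rtrip (hC : 0 < C) (hC1 : C ≤ 1) (hB : 1 ≤ B) (j : ℕ) (hj : j < N)
    (q : ℕ → Prop) (φ : ℕ → ℝ)
    (hq : ∀ k, k < j → q k) (hφ : ∀ k, k < j → φ k = C) (hqj : ¬ q j)
    (hφall : ∀ k, k < N → q k → φ k ≤ C)
    (hki : ∀ k, k < j → k ≠ i₀.val) :
    Rch N C B i₀ (st N C q φ)
      (st N C (fun i => i = j ∨ q i)
        (fun i => if i = j then C else if i < j then 0 else φ i)) := by
  -- outbound carrying can j
  have h1 : Rch N C B i₀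
      ⟨0, 1, (st N C q φ).canPos, (st N C q φ).canFuel⟩
      ⟨Dd C j, 1/2,
        fun c => if c ∈ ({⟨j, hj⟩} : Finset (Fin N)) then Dd C j else (st N C q φ).canPos c,
        fun c => if c.val < j then C/2 else (st N C q φ).canFuel c⟩ := by
    refine rch_out hC hC1 j (le_of_lt hj) {⟨j, hj⟩} (by simpa using hB) _ _ ?_ ?_ ?_ ?_ ?_
    · intro c hc
      rw [Finset.mem_singleton] at hc
      subst hc
      exact st_canPos_not _ hqj
    · intro k hk
      rw [st_canPos_of k (hq k.val hk)]
    · intro k hk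
      rw [st_canFuel_of k (hq k.val hk), hφ k.val hk]
    · intro k hk hmem
      rw [Finset.mem_singleton] at hmem
      have : k.val = j := congrArg Fin.val hmem
      omega
    · intro k hk
      exact fun h => hki k.val hk (congrArg Fin.val h)
  -- inbound, can j left at Dd C j
  have heqA : (⟨Dd C j, 1/2,
        fun c => if c ∈ ({⟨j, hj⟩} : Finset (Fin N)) then Dd C j else (st N C q φ).canPos c,
        fun c => if c.val < j then C/2 else (st N C q φ).canFuel c⟩ : MaddexState N)
      = ⟨Dd C j, 1/2,
        fun c => if c ∈ (∅ : Finset (Fin N)) then Dd C j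
          else (if c ∈ ({⟨j, hj⟩} : Finset (Fin N)) then Dd C j else (st N C q φ).canPos c),
        fun c => if c.val < j then C/2 else (st N C q φ).canFuel c⟩ := by
    refine mst_ext rfl rfl ?_ rfl
    funext c
    show (if c ∈ ({⟨j, hj⟩} : Finset (Fin N)) then Dd C j else (st N C q φ).canPos c)
      = (if c ∈ (∅ : Finset (Fin N)) then Dd C j
        else (if c ∈ ({⟨j, hj⟩} : Finset (Fin N)) then Dd C j else (st N C q φ).canPos c))
    rw [if_neg (Finset.notMem_empty c)]
  have h2 : Rch N C B i₀
      ⟨Dd C j, 1/2,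
        fun c => if c ∈ (∅ : Finset (Fin N)) then Dd C j
          else (if c ∈ ({⟨j, hj⟩} : Finset (Fin N)) then Dd C j else (st N C q φ).canPos c),
        fun c => if c.val < j then C/2 else (st N C q φ).canFuel c⟩
      ⟨0, 0,
        fun c => if c ∈ (∅ : Finset (Fin N)) then 0
          else (if c ∈ ({⟨j, hj⟩} : Finset (Fin N)) then Dd C j else (st N C q φ).canPos c),
        fun c => if c.val < j then 0
          else (if c.val < j then C/2 else (st N C q φ).canFuel c)⟩ := by
    refine rch_in hC hC1 j (le_of_lt hj) ∅ (by simp) _ _ ?_ ?_ (by simp) ?_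
    · intro k hk
      have hkz : k ∉ ({⟨j, hj⟩} : Finset (Fin N)) := by
        rw [Finset.mem_singleton]
        intro h
        have : k.val = j := congrArg Fin.val h
        omega
      rw [if_neg hkz, st_canPos_of k (hq k.val hk)]
    · intro k hk
      rw [if_pos hk]
    · intro k hk
      exact fun h => hki k.val hk (congrArg Fin.val h)
  -- refill at the station
  have h3 : Stp N C B i₀
      ⟨0, 0,
        fun c => if c ∈ (∅ : Finset (Fin N)) then 0
          else (if c ∈ ({⟨j, hj⟩} : Finset (Fin N)) then Dd C j else (st N C q φ).canPos c),
        fun c => if c.val < j then 0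
          else (if c.val < j then C/2 else (st N C q φ).canFuel c)⟩
      (st N C (fun i => i = j ∨ q i)
        (fun i => if i = j then C else if i < j then 0 else φ i)) := by
    have hBpos : ∀ c : Fin N,
        ((⟨0, 0,
          fun c => if c ∈ (∅ : Finset (Fin N)) then 0
            else (if c ∈ ({⟨j, hj⟩} : Finset (Fin N)) then Dd C j else (st N C q φ).canPos c),
          fun c => if c.val < j then 0
            else (if c.val < j then C/2 else (st N C q φ).canFuel c)⟩ : MaddexState N)).canPos c
        = (if c ∈ ({⟨j, hj⟩} : Finset (Fin N)) then Dd C j else (st N C q φ).canPos c) := by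
      intro c
      show (if c ∈ (∅ : Finset (Fin N)) then (0:ℝ)
          else (if c ∈ ({⟨j, hj⟩} : Finset (Fin N)) then Dd C j else (st N C q φ).canPos c))
        = (if c ∈ ({⟨j, hj⟩} : Finset (Fin N)) then Dd C j else (st N C q φ).canPos c)
      rw [if_neg (Finset.notMem_empty c)]
    have hBfuel : ∀ c : Fin N,
        ((⟨0, 0,
          fun c => if c ∈ (∅ : Finset (Fin N)) then 0
            else (if c ∈ ({⟨j, hj⟩} : Finset (Fin N)) then Dd C j else (st N C q φ).canPos c),
          fun c => if c.val < j then 0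
            else (if c.val < j then C/2 else (st N C q φ).canFuel c)⟩ : MaddexState N)).canFuel c
        = (if c.val < j then 0 else (st N C q φ).canFuel c) := by
      intro c
      show (if c.val < j then (0:ℝ) else (if c.val < j then C/2 else (st N C q φ).canFuel c))
        = _
      by_cases h4 : c.val < j
      · rw [if_pos h4, if_pos h4]
      · rw [if_neg h4, if_neg h4, if_neg h4]
    refine stp_refill _ rfl (le_of_lt hC) (by norm_num) ?_ rfl rfl ?_ ?_ ?_
    · intro i
      rw [hBfuel i]
      by_cases h4 : i.val < j
      · rw [if_pos h4]; linarith
      · rw [if_neg h4]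
        by_cases h5 : q i.val
        · rw [st_canFuel_of i h5]; exact hφall i.val i.isLt h5
        · rw [st_canFuel_not i h5]
    · -- canPos equality
      funext c
      rw [hBpos c]
      by_cases hc : c = (⟨j, hj⟩ : Fin N)
      · subst hc
        rw [st_canPos_of _ (Or.inl rfl), if_pos (Finset.mem_singleton_self _)]
      · have hcv : c.val ≠ j := fun h => hc (Fin.ext h)
        rw [if_neg (by rw [Finset.mem_singleton]; exact hc)]
        by_cases hqc : q c.val
        · rw [st_canPos_of c (Or.inr hqc : c.val = j ∨ q c.val), st_canPos_of c hqc]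
        · rw [st_canPos_not c (not_or.mpr ⟨hcv, hqc⟩ : ¬ (c.val = j ∨ q c.val)),
            st_canPos_not c hqc]
    · -- cans at the station get filled up
      intro i hi
      rw [hBpos i] at hi
      by_cases hc : i = (⟨j, hj⟩ : Fin N)
      · exfalso
        rw [if_pos (by rw [hc]; exact Finset.mem_singleton_self _)] at hi
        exact (Dd_pos (le_of_lt hC) j).ne' hi
      · have hcv : i.val ≠ j := fun h => hc (Fin.ext h)
        rw [if_neg (by rw [Finset.mem_singleton]; exact hc)] at hi
        by_cases hqc : q i.val
        · exfalso
          rw [st_canPos_of i hqc] at hi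
          exact (Dd_pos (le_of_lt hC) i.val).ne' hi
        · exact st_canFuel_not i (not_or.mpr ⟨hcv, hqc⟩ : ¬ (i.val = j ∨ q i.val))
    · -- cans away from the station keep their fuel
      intro i hi
      rw [hBfuel i]
      by_cases hc : i = (⟨j, hj⟩ : Fin N)
      · subst hc
        rw [st_canFuel_of _ (Or.inl rfl), if_neg (Nat.lt_irrefl j), st_canFuel_not _ hqj,
          if_pos (rfl : ((⟨j, hj⟩ : Fin N) : ℕ) = j),
          if_neg (show ¬ ((⟨j, hj⟩ : Fin N) : ℕ) < j from Nat.lt_irrefl j)]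
      · have hcv : i.val ≠ j := fun h => hc (Fin.ext h)
        by_cases hqc : q i.val
        · rw [st_canFuel_of i (Or.inr hqc : i.val = j ∨ q i.val)]
          show (if i.val = j then C else if i.val < j then (0:ℝ) else φ i.val)
            = (if i.val < j then 0 else (st N C q φ).canFuel i)
          rw [if_neg hcv]
          by_cases h4 : i.val < j
          · rw [if_pos h4, if_pos h4]
          · rw [if_neg h4, if_neg h4, st_canFuel_of i hqc]
        · have h4 : ¬ i.val < j := fun h => hqc (hq i.val h)
          rw [st_canFuel_not i (not_or.mpr ⟨hcv, hqc⟩ : ¬ (i.val = j ∨ q i.val)),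
            if_neg h4, st_canFuel_not i hqc]
  have hst : st N C q φ = ⟨0, 1, (st N C q φ).canPos, (st N C q φ).canFuel⟩ := rfl
  rw [hst]
  rw [heqA] at h1
  exact (h1.trans h2).tail h3

lemma rch_fetch (hC : 0 < C) (hC1 : C ≤ 1) (hB : 1 ≤ B) (j : ℕ) (hj : j < N)
    (q : ℕ → Prop) (φ : ℕ → ℝ)
    (hq : ∀ k, k < j → q k) (hφ : ∀ k, k < j → φ k = C) (hqj : q j)
    (hφall : ∀ k, k < N → q k → φ k ≤ C)
    (hki : ∀ k, k < j → k ≠ i₀.val) :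
    Rch N C B i₀ (st N C q φ)
      (st N C (fun i => i ≠ j ∧ q i) (fun i => if i < j then 0 else φ i)) := by
  -- outbound, carrying nothing
  have h1 : Rch N C B i₀
      ⟨0, 1, (st N C q φ).canPos, (st N C q φ).canFuel⟩
      ⟨Dd C j, 1/2,
        fun c => if c ∈ (∅ : Finset (Fin N)) then Dd C j else (st N C q φ).canPos c,
        fun c => if c.val < j then C/2 else (st N C q φ).canFuel c⟩ := by
    refine rch_out hC hC1 j (le_of_lt hj) ∅ (by simp) _ _ (by simp) ?_ ?_ (by simp) ?_
    · intro k hk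
      rw [st_canPos_of k (hq k.val hk)]
    · intro k hk
      rw [st_canFuel_of k (hq k.val hk), hφ k.val hk]
    · intro k hk
      exact fun h => hki k.val hk (congrArg Fin.val h)
  have heqA : (⟨Dd C j, 1/2,
        fun c => if c ∈ (∅ : Finset (Fin N)) then Dd C j else (st N C q φ).canPos c,
        fun c => if c.val < j then C/2 else (st N C q φ).canFuel c⟩ : MaddexState N)
      = ⟨Dd C j, 1/2,
        fun c => if c ∈ ({⟨j, hj⟩} : Finset (Fin N)) then Dd C j else (st N C q φ).canPos c,
        fun c => if c.val < j then C/2 else (st N C q φ).canFuel c⟩ := by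
    refine mst_ext rfl rfl ?_ rfl
    funext c
    show (if c ∈ (∅ : Finset (Fin N)) then Dd C j else (st N C q φ).canPos c)
      = (if c ∈ ({⟨j, hj⟩} : Finset (Fin N)) then Dd C j else (st N C q φ).canPos c)
    rw [if_neg (Finset.notMem_empty c)]
    by_cases hc : c = (⟨j, hj⟩ : Fin N)
    · rw [if_pos (by rw [hc]; exact Finset.mem_singleton_self _), hc,
        st_canPos_of _ hqj]
    · rw [if_neg (by rw [Finset.mem_singleton]; exact hc)]
  -- inbound, carrying can j
  have h2 : Rch N C B i₀
      ⟨Dd C j, 1/2,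
        fun c => if c ∈ ({⟨j, hj⟩} : Finset (Fin N)) then Dd C j else (st N C q φ).canPos c,
        fun c => if c.val < j then C/2 else (st N C q φ).canFuel c⟩
      ⟨0, 0,
        fun c => if c ∈ ({⟨j, hj⟩} : Finset (Fin N)) then 0 else (st N C q φ).canPos c,
        fun c => if c.val < j then 0
          else (if c.val < j then C/2 else (st N C q φ).canFuel c)⟩ := by
    refine rch_in hC hC1 j (le_of_lt hj) {⟨j, hj⟩} (by simpa using hB) _ _ ?_ ?_ ?_ ?_
    · intro k hk
      rw [st_canPos_of k (hq k.val hk)]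
    · intro k hk
      rw [if_pos hk]
    · intro k hk hmem
      rw [Finset.mem_singleton] at hmem
      have : k.val = j := congrArg Fin.val hmem
      omega
    · intro k hk
      exact fun h => hki k.val hk (congrArg Fin.val h)
  -- refill at the station
  have h3 : Stp N C B i₀
      ⟨0, 0,
        fun c => if c ∈ ({⟨j, hj⟩} : Finset (Fin N)) then 0 else (st N C q φ).canPos c,
        fun c => if c.val < j then 0
          else (if c.val < j then C/2 else (st N C q φ).canFuel c)⟩
      (st N C (fun i => i ≠ j ∧ q i) (fun i => if i < j then 0 else φ i)) := by
    have hBfuel : ∀ c : Fin N,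
        ((⟨0, 0,
          fun c => if c ∈ ({⟨j, hj⟩} : Finset (Fin N)) then 0 else (st N C q φ).canPos c,
          fun c => if c.val < j then 0
            else (if c.val < j then C/2 else (st N C q φ).canFuel c)⟩ : MaddexState N)).canFuel c
        = (if c.val < j then 0 else (st N C q φ).canFuel c) := by
      intro c
      show (if c.val < j then (0:ℝ) else (if c.val < j then C/2 else (st N C q φ).canFuel c))
        = (if c.val < j then 0 else (st N C q φ).canFuel c)
      by_cases h4 : c.val < j
      · rw [if_pos h4, if_pos h4]
      · rw [if_neg h4, if_neg h4, if_neg h4]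
    refine stp_refill _ rfl (le_of_lt hC) (by norm_num) ?_ rfl rfl ?_ ?_ ?_
    · intro i
      rw [hBfuel i]
      by_cases h4 : i.val < j
      · rw [if_pos h4]; linarith
      · rw [if_neg h4]
        by_cases h5 : q i.val
        · rw [st_canFuel_of i h5]; exact hφall i.val i.isLt h5
        · rw [st_canFuel_not i h5]
    · -- canPos equality
      funext c
      show (st N C (fun i => i ≠ j ∧ q i) (fun i => if i < j then 0 else φ i)).canPos c
        = (if c ∈ ({⟨j, hj⟩} : Finset (Fin N)) then 0 else (st N C q φ).canPos c)
      by_cases hc : c = (⟨j, hj⟩ : Fin N)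
      · rw [if_pos (by rw [hc]; exact Finset.mem_singleton_self _),
          st_canPos_not c (fun h => h.1 (by rw [hc]) : ¬ (c.val ≠ j ∧ q c.val))]
      · have hcv : c.val ≠ j := fun h => hc (Fin.ext h)
        rw [if_neg (by rw [Finset.mem_singleton]; exact hc)]
        by_cases hqc : q c.val
        · rw [st_canPos_of c (⟨hcv, hqc⟩ : c.val ≠ j ∧ q c.val), st_canPos_of c hqc]
        · rw [st_canPos_not c (fun h => hqc h.2 : ¬ (c.val ≠ j ∧ q c.val)),
            st_canPos_not c hqc]
    · -- cans at the station get filled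
      intro i hi
      by_cases hc : i = (⟨j, hj⟩ : Fin N)
      · exact st_canFuel_not i (fun h => h.1 (by rw [hc]) : ¬ (i.val ≠ j ∧ q i.val))
      · have hcv : i.val ≠ j := fun h => hc (Fin.ext h)
        have hi' : (st N C q φ).canPos i = 0 := by
          have : ((⟨0, 0,
            fun c => if c ∈ ({⟨j, hj⟩} : Finset (Fin N)) then 0 else (st N C q φ).canPos c,
            fun c => if c.val < j then 0
              else (if c.val < j then C/2 else (st N C q φ).canFuel c)⟩ : MaddexState N)).canPos i
            = (st N C q φ).canPos i := by
            show (if i ∈ ({⟨j, hj⟩} : Finset (Fin N)) then (0:ℝ) else (st N C q φ).canPos i)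
              = (st N C q φ).canPos i
            rw [if_neg (by rw [Finset.mem_singleton]; exact hc)]
          rw [this] at hi
          exact hi
        by_cases hqc : q i.val
        · exfalso
          rw [st_canPos_of i hqc] at hi'
          exact (Dd_pos (le_of_lt hC) i.val).ne' hi'
        · exact st_canFuel_not i (fun h => hqc h.2 : ¬ (i.val ≠ j ∧ q i.val))
    · -- cans away keep their fuel
      intro i hi
      rw [hBfuel i]
      by_cases hc : i = (⟨j, hj⟩ : Fin N)
      · exfalso
        apply hi
        show (if i ∈ ({⟨j, hj⟩} : Finset (Fin N)) then (0:ℝ) else (st N C q φ).canPos i) = 0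
        rw [if_pos (by rw [hc]; exact Finset.mem_singleton_self _)]
      · have hcv : i.val ≠ j := fun h => hc (Fin.ext h)
        by_cases hqc : q i.val
        · rw [st_canFuel_of i (⟨hcv, hqc⟩ : i.val ≠ j ∧ q i.val)]
          show (if i.val < j then (0:ℝ) else φ i.val)
            = (if i.val < j then 0 else (st N C q φ).canFuel i)
          by_cases h4 : i.val < j
          · rw [if_pos h4, if_pos h4]
          · rw [if_neg h4, if_neg h4, st_canFuel_of i hqc]
        · exfalso
          apply hi
          show (if i ∈ ({⟨j, hj⟩} : Finset (Fin N)) then (0:ℝ) else (st N C q φ).canPos i) = 0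
          rw [if_neg (by rw [Finset.mem_singleton]; exact hc), st_canPos_not i hqc]
  have hst : st N C q φ = ⟨0, 1, (st N C q φ).canPos, (st N C q φ).canFuel⟩ := rfl
  rw [hst]
  rw [heqA] at h1
  exact (h1.trans h2).tail h3

lemma rch_recfill (hC : 0 < C) (hC1 : C ≤ 1) (hB : 1 ≤ B) :
    ∀ (j : ℕ), j ≤ N → ∀ (q : ℕ → Prop) (φ : ℕ → ℝ),
    (∀ k, k < j → q k) →
    (∀ k, k < N → q k → φ k ≤ C) →
    (∀ k, k < j → k ≠ i₀.val) →
    Rch N C B i₀ (st N C q φ) (st N C q (fun k => if k < j then C else φ k)) := by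
  intro j
  induction j with
  | zero =>
    intro _ q φ _ _ _
    have he : st N C q φ = st N C q (fun k => if k < 0 then C else φ k) :=
      st_congr (fun i => Iff.rfl) (fun i _ => (if_neg (Nat.not_lt_zero _)).symm)
    rw [← he]
    exact Relation.ReflTransGen.refl
  | succ j ih =>
    intro hjN q φ hq hφall hki
    have hj : j < N := hjN
    have hqj : q j := hq j (Nat.lt_succ_self j)
    -- (a) fill stones < j
    have ha : Rch N C B i₀ (st N C q φ)
        (st N C q (fun k => if k < j then C else φ k)) :=
      ih (by omega) q φ (fun k hk => hq k (by omega)) hφall (fun k hk => hki k (by omega))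
    have hφ1 : ∀ k, k < N → q k → (if k < j then C else φ k) ≤ C := by
      intro k hk hqk
      by_cases h : k < j
      · rw [if_pos h]
      · rw [if_neg h]; exact hφall k hk hqk
    -- (b) fetch can j home
    have hb : Rch N C B i₀
        (st N C q (fun k => if k < j then C else φ k))
        (st N C (fun i => i ≠ j ∧ q i)
          (fun i => if i < j then 0 else (if i < j then C else φ i))) :=
      rch_fetch hC hC1 hB j hj q _ (fun k hk => hq k (by omega))
        (fun k hk => if_pos hk) hqj hφ1 (fun k hk => hki k (by omega))
    have hφ2 : ∀ k, k < N → ((k ≠ j ∧ q k)) →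
        (if k < j then (0:ℝ) else (if k < j then C else φ k)) ≤ C := by
      intro k hk hqk
      by_cases h : k < j
      · rw [if_pos h]; linarith
      · rw [if_neg h, if_neg h]; exact hφall k hk hqk.2
    -- (c) fill stones < j again
    have hc2 : Rch N C B i₀
        (st N C (fun i => i ≠ j ∧ q i)
          (fun i => if i < j then 0 else (if i < j then C else φ i)))
        (st N C (fun i => i ≠ j ∧ q i)
          (fun k => if k < j then C
            else (if k < j then 0 else (if k < j then C else φ k)))) :=
      ih (by omega) _ _ (fun k hk => ⟨by omega, hq k (by omega)⟩) hφ2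
        (fun k hk => hki k (by omega))
    have hφ3 : ∀ k, k < N → ((k ≠ j ∧ q k)) →
        (if k < j then C
          else (if k < j then (0:ℝ) else (if k < j then C else φ k))) ≤ C := by
      intro k hk hqk
      by_cases h : k < j
      · rw [if_pos h]
      · rw [if_neg h, if_neg h, if_neg h]; exact hφall k hk hqk.2
    -- (d) take can j back out, full
    have hd : Rch N C B i₀
        (st N C (fun i => i ≠ j ∧ q i)
          (fun k => if k < j then C
            else (if k < j then 0 else (if k < j then C else φ k))))
        (st N C (fun i => i = j ∨ (i ≠ j ∧ q i))
          (fun i => if i = j then C else if i < j then 0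
            else (if i < j then C
              else (if i < j then 0 else (if i < j then C else φ i))))) :=
      rch_rtrip hC hC1 hB j hj _ _ (fun k hk => ⟨by omega, hq k (by omega)⟩)
        (fun k hk => if_pos hk) (fun h => h.1 rfl) hφ3 (fun k hk => hki k (by omega))
    have hφ4 : ∀ k, k < N → (k = j ∨ (k ≠ j ∧ q k)) →
        (if k = j then C else if k < j then (0:ℝ)
          else (if k < j then C
            else (if k < j then 0 else (if k < j then C else φ k)))) ≤ C := by
      intro k hk hqk
      by_cases he : k = j
      · rw [if_pos he]
      · rw [if_neg he]
        by_cases h : k < j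
        · rw [if_pos h]; linarith
        · rw [if_neg h, if_neg h, if_neg h, if_neg h]
          rcases hqk with h' | h'
          · exact absurd h' he
          · exact hφall k hk h'.2
    -- (e) fill stones < j a third time
    have he2 : Rch N C B i₀
        (st N C (fun i => i = j ∨ (i ≠ j ∧ q i))
          (fun i => if i = j then C else if i < j then 0
            else (if i < j then C
              else (if i < j then 0 else (if i < j then C else φ i)))))
        (st N C (fun i => i = j ∨ (i ≠ j ∧ q i))
          (fun k => if k < j then C
            else (if k = j then C else if k < j then 0
              else (if k < j then C
            else (if k < j then 0 else (if k < j then C else φ k)))))) :=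
      ih (by omega) _ _ (fun k hk => Or.inr ⟨by omega, hq k (by omega)⟩) hφ4
        (fun k hk => hki k (by omega))
    -- final bookkeeping
    have hf : st N C (fun i => i = j ∨ (i ≠ j ∧ q i))
          (fun k => if k < j then C
            else (if k = j then C else if k < j then 0
              else (if k < j then C
            else (if k < j then 0 else (if k < j then C else φ k)))))
        = st N C q (fun k => if k < j + 1 then C else φ k) := by
      refine st_congr (fun i => ?_) (fun i _ => ?_)
      · constructor
        · rintro (h | h)
          · rw [h]; exact hqj
          · exact h.2
        · intro h
          by_cases he : i.val = j
          · exact Or.inl he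
          · exact Or.inr ⟨he, h⟩
      · by_cases h : i.val < j
        · rw [if_pos h, if_pos (by omega : i.val < j + 1)]
        · rw [if_neg h]
          by_cases he : i.val = j
          · rw [if_pos he, if_pos (by omega : i.val < j + 1)]
          · rw [if_neg he, if_neg h, if_neg h, if_neg h, if_neg h,
              if_neg (by omega : ¬ i.val < j + 1)]
    rw [hf] at he2
    exact ha.trans (hb.trans (hc2.trans (hd.trans he2)))

lemma rch_phases (hC : 0 < C) (hC1 : C ≤ 1) (hB : 1 ≤ B)
    (hi₀ : i₀.val = N - 1) (hN : 1 ≤ N) :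
    ∀ m, m ≤ N - 1 →
    Rch N C B i₀ (st N C (fun _ => False) (fun _ => C))
      (st N C (fun i => i < m) (fun _ => C)) := by
  intro m
  induction m with
  | zero =>
    intro _
    have he : st N C (fun _ => False) (fun _ => C)
        = st N C (fun i => i < 0) (fun _ => C) :=
      st_congr (fun i => by simp) (fun i _ => rfl)
    rw [← he]
    exact Relation.ReflTransGen.refl
  | succ m ih =>
    intro hm
    have hmN : m < N := by omega
    have ha := ih (by omega)
    have hki : ∀ k, k < m → k ≠ i₀.val := by intro k hk; omega
    have hb : Rch N C B i₀ (st N C (fun i => i < m) (fun _ => C))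
        (st N C (fun i => i = m ∨ i < m)
          (fun i => if i = m then C else if i < m then 0 else C)) :=
      rch_rtrip hC hC1 hB m hmN _ _ (fun k hk => hk) (fun k _ => rfl)
        (lt_irrefl m) (fun k _ _ => le_rfl) hki
    have hφall : ∀ k, k < N → (k = m ∨ k < m) →
        (if k = m then C else if k < m then (0:ℝ) else C) ≤ C := by
      intro k _ _
      by_cases he : k = m
      · rw [if_pos he]
      · rw [if_neg he]
        by_cases h : k < m
        · rw [if_pos h]; linarith
        · rw [if_neg h]
    have hki' : ∀ k, k < m + 1 → k ≠ i₀.val := by intro k hk; omega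
    have hc2 : Rch N C B i₀
        (st N C (fun i => i = m ∨ i < m)
          (fun i => if i = m then C else if i < m then 0 else C))
        (st N C (fun i => i = m ∨ i < m)
          (fun k => if k < m + 1 then C
            else (if k = m then C else if k < m then 0 else C))) :=
      rch_recfill hC hC1 hB (m + 1) (by omega) _ _
        (fun k hk => by omega) hφall hki'
    have hf : st N C (fun i => i = m ∨ i < m)
          (fun k => if k < m + 1 then C
            else (if k = m then C else if k < m then 0 else C))
        = st N C (fun i => i < m + 1) (fun _ => C) := by
      refine st_congr (fun i => by omega) (fun i hi => ?_)
      rw [if_pos (by omega : i.val < m + 1)]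
    rw [hf] at hc2
    exact ha.trans (hb.trans hc2)

lemma rtg_exists {α : Type*} {r : α → α → Prop} {a b : α}
    (h : Relation.ReflTransGen r a b) :
    ∃ (k : ℕ) (f : ℕ → α), f 0 = a ∧ f k = b ∧ ∀ j < k, r (f j) (f (j + 1)) := by
  induction h with
  | refl => exact ⟨0, fun _ => a, rfl, rfl, fun j hj => absurd hj (Nat.not_lt_zero j)⟩
  | @tail b c hab hbc ih =>
    obtain ⟨k, f, h0, hk, hs⟩ := ih
    refine ⟨k + 1, Function.update f (k + 1) c, ?_, ?_, ?_⟩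
    · rw [Function.update_of_ne (by omega : (0:ℕ) ≠ k + 1)]; exact h0
    · rw [Function.update_self]
    · intro j hj
      rcases Nat.lt_or_ge j k with h' | h'
      · rw [Function.update_of_ne (by omega : j ≠ k + 1),
          Function.update_of_ne (by omega : j + 1 ≠ k + 1)]
        exact hs j h'
      · have hjk : j = k := by omega
        subst hjk
        rw [Function.update_of_ne (by omega : j ≠ j + 1), Function.update_self, hk]
        exact hbc

end MaddexAux

open MaddexAux

/-- With `N ≥ 2` cans and `C ≤ 1`, there is a plan whose final state has the
jeep at `0`, one can (whose fuel is never used, so it is full in every state)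
at position `0` with content `C`, and the remaining `N − 1` cans full at the
positions `D_{N−2}, D_{N−3}, …, D_1, D_0` (with `D_j = (j·C + 1)/2`)
respectively. -/
theorem maddex_dump_all_cans (N B : ℕ) (C : ℝ) (hC : 0 < C) (hC1 : C ≤ 1)
    (hB : 1 ≤ B) (hN : 2 ≤ N) :
    ∃ (k : ℕ) (f : ℕ → MaddexState N) (i₀ : Fin N)
      (g : Fin (N - 1) → Fin N),
      f 0 = maddexInit N C ∧
      (∀ j < k, MaddexStep C B (f j) (f (j + 1))) ∧
      (f k).pos = 0 ∧
      (f k).canPos i₀ = 0 ∧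
      (∀ j ≤ k, (f j).canFuel i₀ = C) ∧
      Function.Injective g ∧
      (∀ l : Fin (N - 1), g l ≠ i₀ ∧
        (f k).canPos (g l) = ((l : ℝ) * C + 1) / 2 ∧
        (f k).canFuel (g l) = C) := by
  have hN1 : N - 1 < N := by omega
  set i₀ : Fin N := ⟨N - 1, hN1⟩ with hi₀def
  have hmain : Rch N C B i₀ (st N C (fun _ => False) (fun _ => C))
      (st N C (fun i => i < N - 1) (fun _ => C)) :=
    rch_phases hC hC1 hB rfl (by omega) (N - 1) le_rfl
  have hinit : maddexInit N C = st N C (fun _ => False) (fun _ => C) :=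
    mst_ext rfl rfl (funext fun i => (if_neg (fun h => h)).symm)
      (funext fun i => (if_neg (fun h => h)).symm)
  rw [← hinit] at hmain
  obtain ⟨k, f, h0, hk, hs⟩ := rtg_exists hmain
  have hfuel : ∀ j, j ≤ k → (f j).canFuel i₀ = C := by
    intro j
    induction j with
    | zero => intro _; rw [h0]; rfl
    | succ j ihj =>
      intro hjk
      exact (hs j (by omega)).2 (ihj (by omega))
  refine ⟨k, f, i₀, fun l => ⟨l.val, by omega⟩, h0,
    fun j hj => (hs j hj).1, ?_, ?_, hfuel, ?_, ?_⟩
  · rw [hk]; rfl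
  · rw [hk]
    exact st_canPos_not i₀ (Nat.lt_irrefl (N - 1))
  · intro a b hab
    have h2 := congrArg Fin.val hab
    exact Fin.ext h2
  · intro l
    have hl : l.val < N - 1 := l.isLt
    refine ⟨?_, ?_, ?_⟩
    · intro h
      rw [hi₀def] at h
      have h2 : ((⟨l.val, by omega⟩ : Fin N) : ℕ) = N - 1 := congrArg Fin.val h
      have h3 : l.val = N - 1 := h2
      omega
    · show (f k).canPos ⟨l.val, by omega⟩ = ((l : ℝ) * C + 1) / 2
      rw [hk, st_canPos_of (q := fun i => i < N - 1) (⟨l.val, by omega⟩ : Fin N) hl]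
      rfl
    · show (f k).canFuel ⟨l.val, by omega⟩ = C
      rw [hk, st_canFuel_of (q := fun i => i < N - 1) (⟨l.val, by omega⟩ : Fin N) hl]
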